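/- lim_{n→∞} (1/n) Σ_{k=1}^{n} ∫₀^{√(2k/n)} e^{-x²/4} dx = lim_{n→∞} (1/n) Σ_{k=n}^∞ ∫_{√(2k/n)}^∞ e^{-x²/4} dx; that is, these two limits exist and are equal. -/

import Mathlib

open MeasureTheory Real Set Filter

/-!
Write `A t = ∫₀^{√(2t)} e^{-x²/4} dx` and `T t = ∫_{√(2t)}^∞ e^{-x²/4} dx`. The two sequences
are Riemann sums `(1/n) ∑ A (k/n)` of the monotone `A` on `[0, 1]` and `(1/n) ∑ T (1 + j/n)` of
the antitone integrable `T` on `[1, ∞)`; comparing sums with integrals shows that they differ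
from `∫₀¹ A` and `∫₁^∞ T` by `O(1/n)`. Both integrals equal `√2 e^{-1/2}`:
`(t - 1) A t + √(2t) e^{-t/2}` and `(t - 1) T t - √(2t) e^{-t/2}` are primitives of `A` and `T`,
and the latter tends to `0` because the Gaussian tail bound gives `t T t ≤ √(2t) e^{-t/2}`.
-/

theorem tendsto_one_div_mul_of_abs_sub_mul_le {S : ℕ → ℝ} {I c : ℝ}
    (h : ∀ᶠ n : ℕ in atTop, |S n - n * I| ≤ c) :
    Tendsto (fun n : ℕ => 1 / (n : ℝ) * S n) atTop (nhds I) := by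
  have herr : Tendsto (fun n : ℕ => (S n - n * I) / n) atTop (nhds 0) := by
    refine squeeze_zero_norm' ?_ (tendsto_const_div_atTop_nhds_zero_nat c)
    filter_upwards [h, eventually_ge_atTop 1] with n hn hn1
    rw [norm_div, Real.norm_natCast, Real.norm_eq_abs]
    gcongr
  have hlim := herr.const_add I
  rw [add_zero] at hlim
  refine hlim.congr' ?_
  filter_upwards [eventually_ge_atTop 1] with n hn
  have : (n : ℝ) ≠ 0 := by positivity
  field_simp
  ring

theorem MonotoneOn.tendsto_riemannSum_Icc_zero_one {f : ℝ → ℝ} (hf : MonotoneOn f (Icc 0 1)) :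
    Tendsto (fun n : ℕ => 1 / (n : ℝ) * ∑ k ∈ Finset.Icc 1 n, f (k / n)) atTop
      (nhds (∫ x in (0 : ℝ)..1, f x)) := by
  refine tendsto_one_div_mul_of_abs_sub_mul_le (c := f 1 - f 0) ?_
  filter_upwards [eventually_ge_atTop 1] with n hn
  have hn0 : (0 : ℝ) < n := by exact_mod_cast hn
  have hg : MonotoneOn (fun u => f (u / n)) (Icc 0 (0 + n)) := by
    intro u hu v hv huv
    simp only [zero_add, mem_Icc] at hu hv
    exact hf ⟨div_nonneg hu.1 hn0.le, (div_le_one hn0).2 hu.2⟩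
      ⟨div_nonneg hv.1 hn0.le, (div_le_one hn0).2 hv.2⟩
      (by gcongr)
  have hint : ∫ u in (0 : ℝ)..0 + n, f (u / n) = n * ∫ x in (0 : ℝ)..1, f x := by
    rw [intervalIntegral.integral_comp_div _ hn0.ne', zero_add, zero_div, div_self hn0.ne',
      smul_eq_mul]
  have hupper := hg.integral_le_sum
  have hlower := hg.sum_le_integral
  have hshift : ∑ i ∈ Finset.range n, f ((0 + ((i + 1 : ℕ) : ℝ)) / n)
      = ∑ k ∈ Finset.Icc 1 n, f (k / n) := by
    rw [← Finset.Ico_add_one_right_eq_Icc, Finset.sum_Ico_eq_sum_range]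
    simp [add_comm]
  have hends : ∑ i ∈ Finset.range n, f ((0 + ((i + 1 : ℕ) : ℝ)) / n)
      = ∑ i ∈ Finset.range n, f ((0 + (i : ℝ)) / n) + (f 1 - f 0) := by
    have := Finset.sum_range_succ' (fun i => f ((i : ℝ) / n)) n
    rw [Finset.sum_range_succ] at this
    simp only [zero_add, Nat.cast_zero, zero_div, div_self hn0.ne'] at this ⊢
    linarith
  rw [hint] at hupper hlower
  rw [hshift] at hupper hends
  rw [abs_le]
  constructor <;> linarith

theorem AntitoneOn.tendsto_riemannSum_Ioi_zero {f : ℝ → ℝ} (hf : AntitoneOn f (Ici 0))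
    (hint : IntegrableOn f (Ioi 0)) (hnonneg : ∀ x ∈ Ioi 0, 0 ≤ f x) :
    Tendsto (fun n : ℕ => 1 / (n : ℝ) * ∑' j : ℕ, f (j / n)) atTop
      (nhds (∫ x in Ioi 0, f x)) := by
  refine tendsto_one_div_mul_of_abs_sub_mul_le (c := f 0) ?_
  filter_upwards [eventually_ge_atTop 1] with n hn
  have hn0 : (0 : ℝ) < (n : ℝ)⁻¹ := by positivity
  set g : ℝ → ℝ := fun v => f ((n : ℝ)⁻¹ * v)
  have hg : AntitoneOn g (Ici 0) := fun u hu v hv huv =>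
    hf (mul_nonneg hn0.le hu) (mul_nonneg hn0.le hv) (by gcongr)
  have hgint : IntegrableOn g (Ioi 0) :=
    (integrableOn_Ioi_comp_mul_left_iff f 0 hn0).2 (by rwa [mul_zero])
  have hgnonneg : ∀ v ∈ Ioi 0, 0 ≤ g v := fun v hv => hnonneg _ (mul_pos hn0 hv)
  have hgI : ∫ v in Ioi 0, g v = n * ∫ x in Ioi 0, f x := by
    rw [integral_comp_mul_left_Ioi f 0 hn0, mul_zero, inv_inv, smul_eq_mul]
  have hsum : ∑' j : ℕ, f (j / n) = ∑' j : ℕ, g j := by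
    simp only [g, div_eq_inv_mul]
  have hupper := hg.tsum_le_integral hgint hgnonneg
  have hlower := hg.integral_le_tsum (hg.summable_of_integrableOn_Ioi_zero hgint hgnonneg) hgnonneg
  rw [hgI] at hupper hlower
  rw [hsum, abs_le]
  simp only [g, mul_zero] at hupper
  constructor <;> linarith

theorem tendsto_exp_neg_mul_sq_atTop {b : ℝ} (hb : 0 < b) :
    Tendsto (fun x : ℝ => exp (-b * x ^ 2)) atTop (nhds 0) :=
  tendsto_exp_atBot.comp <|
    (tendsto_pow_atTop two_ne_zero).const_mul_atTop_of_neg (neg_lt_zero.2 hb)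

theorem integral_Ioi_mul_exp_neg_mul_sq {b : ℝ} (hb : 0 < b) (c : ℝ) :
    ∫ x in Ioi c, x * exp (-b * x ^ 2) = exp (-b * c ^ 2) / (2 * b) := by
  have hderiv (x : ℝ) : HasDerivAt (fun y => -exp (-b * y ^ 2) / (2 * b))
      (x * exp (-b * x ^ 2)) x := by
    have := (((hasDerivAt_pow 2 x).const_mul (-b)).exp.neg).div_const (2 * b)
    refine this.congr_deriv ?_
    field_simp
    ring
  have hlim : Tendsto (fun y => -exp (-b * y ^ 2) / (2 * b)) atTop (nhds 0) := by
    simpa using ((tendsto_exp_neg_mul_sq_atTop hb).neg).div_const (2 * b)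
  rw [integral_Ioi_of_hasDerivAt_of_tendsto (hderiv c).continuousAt.continuousWithinAt
    (fun x _ => hderiv x) (integrable_mul_exp_neg_mul_sq hb).integrableOn hlim]
  ring

theorem integral_Ioi_exp_neg_mul_sq_le {b c : ℝ} (hb : 0 < b) (hc : 0 < c) :
    ∫ x in Ioi c, exp (-b * x ^ 2) ≤ exp (-b * c ^ 2) / (2 * b * c) :=
  calc ∫ x in Ioi c, exp (-b * x ^ 2)
      ≤ ∫ x in Ioi c, x * exp (-b * x ^ 2) / c := by
        refine setIntegral_mono_on (integrable_exp_neg_mul_sq hb).integrableOn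
          ((integrable_mul_exp_neg_mul_sq hb).integrableOn.div_const c) measurableSet_Ioi
          fun x hx => ?_
        rw [mul_div_right_comm]
        exact le_mul_of_one_le_left (exp_pos _).le ((one_le_div hc).2 (le_of_lt hx))
    _ = exp (-b * c ^ 2) / (2 * b * c) := by
        rw [integral_div, integral_Ioi_mul_exp_neg_mul_sq hb, div_div]

noncomputable def gaussHead (t : ℝ) : ℝ := ∫ x in (0 : ℝ)..√(2 * t), exp (-x ^ 2 / 4)

noncomputable def gaussTail (t : ℝ) : ℝ := ∫ x in Ioi √(2 * t), exp (-x ^ 2 / 4)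

theorem exp_neg_sq_div_four_eq (x : ℝ) : exp (-x ^ 2 / 4) = exp (-(1 / 4) * x ^ 2) := by
  ring_nf

theorem integrable_exp_neg_sq_div_four : Integrable fun x : ℝ => exp (-x ^ 2 / 4) := by
  simpa only [exp_neg_sq_div_four_eq] using integrable_exp_neg_mul_sq (b := 1 / 4) (by norm_num)

theorem gaussHead_add_gaussTail (t : ℝ) :
    gaussHead t + gaussTail t = ∫ x in Ioi 0, exp (-x ^ 2 / 4) := by
  rw [gaussHead, gaussTail, intervalIntegral.integral_of_le (sqrt_nonneg _),
    ← setIntegral_union (Ioc_disjoint_Ioi le_rfl) measurableSet_Ioi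
      integrable_exp_neg_sq_div_four.integrableOn integrable_exp_neg_sq_div_four.integrableOn,
    Ioc_union_Ioi_eq_Ioi (sqrt_nonneg _)]

theorem gaussTail_nonneg (t : ℝ) : 0 ≤ gaussTail t :=
  setIntegral_nonneg measurableSet_Ioi fun _ _ => (exp_pos _).le

theorem gaussTail_antitone : Antitone gaussTail := fun _ _ hst =>
  setIntegral_mono_set integrable_exp_neg_sq_div_four.integrableOn
    (.of_forall fun _ => (exp_pos _).le)
    (Ioi_subset_Ioi (sqrt_le_sqrt (by linarith))).eventuallyLE

theorem gaussHead_monotone : Monotone gaussHead := fun s t hst => by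
  linarith [gaussTail_antitone hst, gaussHead_add_gaussTail s, gaussHead_add_gaussTail t]

@[fun_prop]
theorem continuous_gaussHead : Continuous gaussHead :=
  (intervalIntegral.continuous_primitive
    (fun _ _ => integrable_exp_neg_sq_div_four.intervalIntegrable) 0).comp (by fun_prop)

theorem hasDerivAt_sqrt_two_mul {t : ℝ} (ht : 0 < t) :
    HasDerivAt (fun u => √(2 * u)) (1 / √(2 * t)) t := by
  refine ((hasDerivAt_sqrt (by positivity)).comp t ((hasDerivAt_id t).const_mul 2)).congr_deriv ?_
  simp only [id]
  field_simp

theorem hasDerivAt_gaussHead {t : ℝ} (ht : 0 < t) :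
    HasDerivAt gaussHead (exp (-t / 2) / √(2 * t)) t := by
  have hcont : Continuous fun x : ℝ => exp (-x ^ 2 / 4) := by fun_prop
  have hprim : HasDerivAt (fun y => ∫ x in (0 : ℝ)..y, exp (-x ^ 2 / 4))
      (exp (-√(2 * t) ^ 2 / 4)) √(2 * t) :=
    intervalIntegral.integral_hasDerivAt_right
      integrable_exp_neg_sq_div_four.intervalIntegrable
      (hcont.stronglyMeasurableAtFilter _ _) hcont.continuousAt
  refine (hprim.comp t (hasDerivAt_sqrt_two_mul ht)).congr_deriv ?_
  rw [sq_sqrt (by positivity)]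
  ring_nf

theorem hasDerivAt_sqrt_two_mul_mul_exp {t : ℝ} (ht : 0 < t) :
    HasDerivAt (fun u => √(2 * u) * exp (-u / 2))
      (exp (-t / 2) / √(2 * t) - √(2 * t) * exp (-t / 2) / 2) t := by
  refine ((hasDerivAt_sqrt_two_mul ht).mul
    (((hasDerivAt_id t).neg.div_const 2).exp)).congr_deriv ?_
  simp only [Pi.neg_apply, id]
  ring

theorem tendsto_sqrt_two_mul_mul_exp :
    Tendsto (fun t => √(2 * t) * exp (-t / 2)) atTop (nhds 0) := by
  have := (tendsto_rpow_mul_exp_neg_mul_atTop_nhds_zero (1 / 2) (1 / 2) (by norm_num)).const_mul √2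
  rw [mul_zero] at this
  refine this.congr' ?_
  filter_upwards [eventually_ge_atTop 0] with t ht
  rw [sqrt_mul zero_le_two, sqrt_eq_rpow t]
  ring_nf

theorem mul_gaussTail_le {t : ℝ} (ht : 0 < t) : t * gaussTail t ≤ √(2 * t) * exp (-t / 2) := by
  have hs : 0 < √(2 * t) := by positivity
  have hbound := integral_Ioi_exp_neg_mul_sq_le (b := 1 / 4) (by norm_num) hs
  simp only [← exp_neg_sq_div_four_eq] at hbound
  rw [sq_sqrt (by positivity)] at hbound
  calc t * gaussTail t ≤ t * (exp (-(2 * t) / 4) / (2 * (1 / 4) * √(2 * t))) :=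
        mul_le_mul_of_nonneg_left hbound ht.le
    _ = √(2 * t) * exp (-t / 2) := by
        have hsq : √(2 * t) ^ 2 = 2 * t := sq_sqrt (by positivity)
        rw [show -(2 * t) / 4 = -t / 2 by ring]
        generalize √(2 * t) = s at hs hsq
        field_simp
        linear_combination (-2) * hsq

noncomputable def gaussHeadPrimitive (u : ℝ) : ℝ := (u - 1) * gaussHead u + √(2 * u) * exp (-u / 2)

noncomputable def gaussTailPrimitive (u : ℝ) : ℝ := (u - 1) * gaussTail u - √(2 * u) * exp (-u / 2)

theorem hasDerivAt_gaussHeadPrimitive {t : ℝ} (ht : 0 < t) :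
    HasDerivAt gaussHeadPrimitive (gaussHead t) t := by
  refine ((((hasDerivAt_id t).sub_const 1).mul (hasDerivAt_gaussHead ht)).add
    (hasDerivAt_sqrt_two_mul_mul_exp ht)).congr_deriv ?_
  have hsq : √(2 * t) ^ 2 = 2 * t := sq_sqrt (by positivity)
  have hs : 0 < √(2 * t) := by positivity
  generalize √(2 * t) = s at hs hsq
  generalize exp (-t / 2) = e
  simp only [id]
  field_simp
  linear_combination (-e) * hsq

theorem integral_gaussHead : ∫ t in (0 : ℝ)..1, gaussHead t = √2 * exp (-1 / 2) := by
  rw [intervalIntegral.integral_eq_sub_of_hasDerivAt_of_le zero_le_one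
    (by unfold gaussHeadPrimitive; fun_prop) (fun t ht => hasDerivAt_gaussHeadPrimitive ht.1)
    (continuous_gaussHead.intervalIntegrable 0 1)]
  norm_num [gaussHeadPrimitive, gaussHead]

theorem gaussTailPrimitive_eq (u : ℝ) :
    gaussTailPrimitive u = (u - 1) * (∫ x in Ioi 0, exp (-x ^ 2 / 4)) - gaussHeadPrimitive u := by
  rw [gaussTailPrimitive, gaussHeadPrimitive]
  linear_combination (u - 1) * gaussHead_add_gaussTail u

theorem hasDerivAt_gaussTailPrimitive {t : ℝ} (ht : 0 < t) :
    HasDerivAt gaussTailPrimitive (gaussTail t) t := by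
  have h : HasDerivAt (fun u => (u - 1) * (∫ x in Ioi 0, exp (-x ^ 2 / 4)) - gaussHeadPrimitive u)
      (1 * (∫ x in Ioi 0, exp (-x ^ 2 / 4)) - gaussHead t) t :=
    (((hasDerivAt_id t).sub_const 1).mul_const _).sub (hasDerivAt_gaussHeadPrimitive ht)
  rw [funext gaussTailPrimitive_eq]
  refine h.congr_deriv ?_
  linarith [gaussHead_add_gaussTail t]

theorem tendsto_gaussTailPrimitive_atTop : Tendsto gaussTailPrimitive atTop (nhds 0) := by
  have hlower := tendsto_sqrt_two_mul_mul_exp.neg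
  rw [neg_zero] at hlower
  refine tendsto_of_tendsto_of_tendsto_of_le_of_le' hlower tendsto_const_nhds ?_ ?_
  all_goals
    filter_upwards [eventually_ge_atTop 1] with t ht
    have := mul_gaussTail_le (by linarith : (0 : ℝ) < t)
    unfold gaussTailPrimitive
    nlinarith [gaussTail_nonneg t]

theorem hasDerivAt_gaussTailPrimitive_one_add {s : ℝ} (hs : -1 < s) :
    HasDerivAt (fun u => gaussTailPrimitive (1 + u)) (gaussTail (1 + s)) s :=
  (hasDerivAt_gaussTailPrimitive (by linarith)).comp_const_add 1 s

theorem tendsto_gaussTailPrimitive_one_add :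
    Tendsto (fun u => gaussTailPrimitive (1 + u)) atTop (nhds 0) :=
  tendsto_gaussTailPrimitive_atTop.comp (tendsto_atTop_add_const_left atTop 1 tendsto_id)

theorem integrableOn_gaussTail_one_add : IntegrableOn (fun s => gaussTail (1 + s)) (Ioi 0) :=
  integrableOn_Ioi_deriv_of_nonneg
    (hasDerivAt_gaussTailPrimitive_one_add neg_one_lt_zero).continuousAt.continuousWithinAt
    (fun _ hs => hasDerivAt_gaussTailPrimitive_one_add (neg_one_lt_zero.trans hs))
    (fun s _ => gaussTail_nonneg (1 + s)) tendsto_gaussTailPrimitive_one_add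

theorem integral_gaussTail_one_add : ∫ s in Ioi 0, gaussTail (1 + s) = √2 * exp (-1 / 2) := by
  rw [integral_Ioi_of_hasDerivAt_of_nonneg
    (hasDerivAt_gaussTailPrimitive_one_add neg_one_lt_zero).continuousAt.continuousWithinAt
    (fun _ hs => hasDerivAt_gaussTailPrimitive_one_add (neg_one_lt_zero.trans hs))
    (fun s _ => gaussTail_nonneg (1 + s)) tendsto_gaussTailPrimitive_one_add]
  norm_num [gaussTailPrimitive]

theorem riemann_sum_limits_equal :
    ∃ L : ℝ,
      Filter.Tendsto
        (fun n : ℕ => (1/(n:ℝ)) * ∑ k ∈ Finset.Icc 1 n,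
          ∫ x in (0:ℝ)..(Real.sqrt (2*k/(n:ℝ))), Real.exp (-x^2/4))
        Filter.atTop (nhds L) ∧
      Filter.Tendsto
        (fun n : ℕ => (1/(n:ℝ)) * ∑' j : ℕ,
          ∫ x in Ioi (Real.sqrt (2*((n:ℝ)+j)/(n:ℝ))), Real.exp (-x^2/4))
        Filter.atTop (nhds L) := by
  refine ⟨√2 * exp (-1 / 2), ?_, ?_⟩
  · have h := (gaussHead_monotone.monotoneOn (Icc 0 1)).tendsto_riemannSum_Icc_zero_one
    rw [integral_gaussHead] at h
    simpa only [gaussHead, mul_div_assoc] using h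
  · have hanti : AntitoneOn (fun s => gaussTail (1 + s)) (Ici 0) := fun _ _ _ _ hst =>
      gaussTail_antitone (by linarith)
    have h := hanti.tendsto_riemannSum_Ioi_zero integrableOn_gaussTail_one_add
      fun s _ => gaussTail_nonneg (1 + s)
    rw [integral_gaussTail_one_add] at h
    refine h.congr' ?_
    filter_upwards [eventually_ge_atTop 1] with n hn
    have hn0 : (n : ℝ) ≠ 0 := by positivity
    congr 1
    refine tsum_congr fun j => ?_
    simp only [gaussTail]
    congr 3
    field_simp
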